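/- Let λ be a nonzero complex number. Then a graded subspace F = F₀ ⊕ F₁ of Ψ_ns(λ) is a submodule if and only if F = R_g^ns or F = S_g^ns for some g ∈ ℂ[y]; moreover S_g^ns ⊆ R_g^ns ⊆ R_ĝ^ns whenever ĝ divides g. -/

import Mathlib

open Polynomial

noncomputable section

/-- `ℂ[x,y]`, realized as polynomials in an outer variable `x` (= `X`) with coefficients in
`ℂ[y]`; the inner variable `y` is `C X`.  The same type also models `ℂ[s,t]`. -/
abbrev P2 : Type := Polynomial (Polynomial ℂ)

/-- the polynomial `x` -/
def xP : P2 := Polynomial.X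

/-- the polynomial `y` -/
def yP : P2 := Polynomial.C Polynomial.X

/-- multiplication by a fixed polynomial, as a `ℂ`-linear operator on `ℂ[x,y]` -/
def mulOp (a : P2) : P2 →ₗ[ℂ] P2 := LinearMap.mulLeft ℂ a

/-- the substitution `f(x,y) ↦ f(x+c,y)`, as a `ℂ`-linear operator on `ℂ[x,y]` -/
def shiftOp (c : ℂ) : P2 →ₗ[ℂ] P2 :=
  (Polynomial.taylor (Polynomial.C c)).restrictScalars ℂ

/-- `f(x,y) ↦ λ^m (x + m β(y)) f(x+m, y)` -/
def genL (lam : ℂ) (β : Polynomial ℂ) (m : ℤ) : P2 →ₗ[ℂ] P2 :=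
  lam ^ m • (mulOp (xP + Polynomial.C ((m : ℂ) • β)) ∘ₗ shiftOp (m : ℂ))

/-- `f(x,y) ↦ λ^m y f(x+m, y)` -/
def genH (lam : ℂ) (m : ℤ) : P2 →ₗ[ℂ] P2 :=
  lam ^ m • (mulOp yP ∘ₗ shiftOp (m : ℂ))

/- In everything that follows, the odd (half-integer) index `p ∈ ℤ + 1/2` is encoded by the
integer `k : ℤ` with `p = k + 1/2`. -/

/-- `L_m` on the even part `ℂ[x,y]` of `Ω(λ,β)` -/
def omegaLe (lam : ℂ) (β : Polynomial ℂ) (m : ℤ) : P2 →ₗ[ℂ] P2 := genL lam β m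

/-- `L_m` on the odd part `ℂ[s,t]` of `Ω(λ,β)` -/
def omegaLo (lam : ℂ) (β : Polynomial ℂ) (m : ℤ) : P2 →ₗ[ℂ] P2 :=
  genL lam (β + Polynomial.C (1/2)) m

/-- `H_m` on either part of `Ω(λ,β)` -/
def omegaH (lam : ℂ) (m : ℤ) : P2 →ₗ[ℂ] P2 := genH lam m

/-- `G_{k+1/2} : M₀ → M₁`, `f(x,y) ↦ λ^{p-1/2} f(s+p,t)` -/
def omegaGe (lam : ℂ) (k : ℤ) : P2 →ₗ[ℂ] P2 := lam ^ k • shiftOp ((k : ℂ) + 1/2)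

/-- `G_{k+1/2} : M₁ → M₀`, `f(s,t) ↦ λ^{p+1/2} (x + 2p β(y)) f(x+p,y)` -/
def omegaGo (lam : ℂ) (β : Polynomial ℂ) (k : ℤ) : P2 →ₗ[ℂ] P2 :=
  lam ^ (k + 1) • (mulOp (xP + Polynomial.C (((2*k+1 : ℤ) : ℂ) • β)) ∘ₗ shiftOp ((k : ℂ) + 1/2))

/-- `Q_{k+1/2} : M₀ → M₁` is the zero map -/
def omegaQe (_k : ℤ) : P2 →ₗ[ℂ] P2 := 0

/-- `Q_{k+1/2} : M₁ → M₀`, `f(s,t) ↦ λ^{p+1/2} y f(x+p,y)` -/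
def omegaQo (lam : ℂ) (k : ℤ) : P2 →ₗ[ℂ] P2 :=
  lam ^ (k + 1) • (mulOp yP ∘ₗ shiftOp ((k : ℂ) + 1/2))

/-- A representation of the N=1 Heisenberg-Virasoro superalgebra `𝔤` on the `ℤ₂`-graded
complex vector space `M₀ ⊕ M₁`: operators `Le m`/`Lo m` (resp. `He`/`Ho`) are the even/odd
components of `L_m` (resp. `H_m`), and `Ge k`/`Go k` (resp. `Qe`/`Qo`) are the two components
of the grading-reversing operator `G_{k+1/2}` (resp. `Q_{k+1/2}`); all ten super-bracket
relations are required to hold on both graded components. -/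
structure GRep (M₀ M₁ : Type*) [AddCommGroup M₀] [Module ℂ M₀]
    [AddCommGroup M₁] [Module ℂ M₁] where
  Le : ℤ → M₀ →ₗ[ℂ] M₀
  Lo : ℤ → M₁ →ₗ[ℂ] M₁
  He : ℤ → M₀ →ₗ[ℂ] M₀
  Ho : ℤ → M₁ →ₗ[ℂ] M₁
  Ge : ℤ → M₀ →ₗ[ℂ] M₁
  Go : ℤ → M₁ →ₗ[ℂ] M₀
  Qe : ℤ → M₀ →ₗ[ℂ] M₁
  Qo : ℤ → M₁ →ₗ[ℂ] M₀
  rel_LL_e : ∀ m n : ℤ, Le m ∘ₗ Le n - Le n ∘ₗ Le m = ((m : ℂ) - (n : ℂ)) • Le (m + n)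
  rel_LL_o : ∀ m n : ℤ, Lo m ∘ₗ Lo n - Lo n ∘ₗ Lo m = ((m : ℂ) - (n : ℂ)) • Lo (m + n)
  rel_LH_e : ∀ m n : ℤ, Le m ∘ₗ He n - He n ∘ₗ Le m = (-(n : ℂ)) • He (m + n)
  rel_LH_o : ∀ m n : ℤ, Lo m ∘ₗ Ho n - Ho n ∘ₗ Lo m = (-(n : ℂ)) • Ho (m + n)
  rel_LG_e : ∀ (m k : ℤ),
    Lo m ∘ₗ Ge k - Ge k ∘ₗ Le m = ((m : ℂ)/2 - ((k : ℂ) + 1/2)) • Ge (m + k)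
  rel_LG_o : ∀ (m k : ℤ),
    Le m ∘ₗ Go k - Go k ∘ₗ Lo m = ((m : ℂ)/2 - ((k : ℂ) + 1/2)) • Go (m + k)
  rel_LQ_e : ∀ (m k : ℤ),
    Lo m ∘ₗ Qe k - Qe k ∘ₗ Le m = (-((m : ℂ)/2 + ((k : ℂ) + 1/2))) • Qe (m + k)
  rel_LQ_o : ∀ (m k : ℤ),
    Le m ∘ₗ Qo k - Qo k ∘ₗ Lo m = (-((m : ℂ)/2 + ((k : ℂ) + 1/2))) • Qo (m + k)
  rel_HG_e : ∀ (m k : ℤ), Ho m ∘ₗ Ge k - Ge k ∘ₗ He m = (m : ℂ) • Qe (m + k)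
  rel_HG_o : ∀ (m k : ℤ), He m ∘ₗ Go k - Go k ∘ₗ Ho m = (m : ℂ) • Qo (m + k)
  rel_GG_e : ∀ k l : ℤ, Go k ∘ₗ Ge l + Go l ∘ₗ Ge k = (2 : ℂ) • Le (k + l + 1)
  rel_GG_o : ∀ k l : ℤ, Ge k ∘ₗ Go l + Ge l ∘ₗ Go k = (2 : ℂ) • Lo (k + l + 1)
  rel_GQ_e : ∀ k l : ℤ, Go k ∘ₗ Qe l + Qo l ∘ₗ Ge k = He (k + l + 1)
  rel_GQ_o : ∀ k l : ℤ, Ge k ∘ₗ Qo l + Qe l ∘ₗ Go k = Ho (k + l + 1)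
  rel_HH_e : ∀ m n : ℤ, He m ∘ₗ He n = He n ∘ₗ He m
  rel_HH_o : ∀ m n : ℤ, Ho m ∘ₗ Ho n = Ho n ∘ₗ Ho m
  rel_HQ_e : ∀ (m k : ℤ), Ho m ∘ₗ Qe k = Qe k ∘ₗ He m
  rel_HQ_o : ∀ (m k : ℤ), He m ∘ₗ Qo k = Qo k ∘ₗ Ho m
  rel_QQ_e : ∀ k l : ℤ, Qo k ∘ₗ Qe l + Qo l ∘ₗ Qe k = 0
  rel_QQ_o : ∀ k l : ℤ, Qe k ∘ₗ Qo l + Qe l ∘ₗ Qo k = 0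

/-- evaluation of a two-variable polynomial (an element of `P2`, outer variable ↦ `A`,
inner variable ↦ `B`) at a pair of commuting operators -/
def eval2End {V : Type*} [AddCommGroup V] [Module ℂ V] (A B : Module.End ℂ V)
    (f : P2) : Module.End ℂ V :=
  Polynomial.eval₂ (Polynomial.aeval B).toRingHom A f

/-- multiplication by a fixed polynomial on `ℂ[x]` -/
def mul1 (a : Polynomial ℂ) : Polynomial ℂ →ₗ[ℂ] Polynomial ℂ := LinearMap.mulLeft ℂ a

/-- the substitution `f(x) ↦ f(x+c)` on `ℂ[x]` -/
def tay (c : ℂ) : Polynomial ℂ →ₗ[ℂ] Polynomial ℂ := Polynomial.taylor c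

/-- `f(x) ↦ λ^m (x + m c) f(x+m)` -/
def phiL (lam c : ℂ) (m : ℤ) : Polynomial ℂ →ₗ[ℂ] Polynomial ℂ :=
  lam ^ m • (mul1 (Polynomial.X + Polynomial.C ((m : ℂ) * c)) ∘ₗ tay (m : ℂ))

/-- `f(x) ↦ λ^m b f(x+m)` -/
def phiH (lam b : ℂ) (m : ℤ) : Polynomial ℂ →ₗ[ℂ] Polynomial ℂ :=
  (lam ^ m * b) • tay (m : ℂ)

/-- `f(x) ↦ λ^{p-1/2} f(s+p)`, `p = k + 1/2` -/
def phiGe (lam : ℂ) (k : ℤ) : Polynomial ℂ →ₗ[ℂ] Polynomial ℂ :=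
  lam ^ k • tay ((k : ℂ) + 1/2)

/-- `f(s) ↦ λ^{p+1/2} (x + 2 p c) f(x+p)`, `p = k + 1/2` -/
def phiGo (lam c : ℂ) (k : ℤ) : Polynomial ℂ →ₗ[ℂ] Polynomial ℂ :=
  lam ^ (k + 1) • (mul1 (Polynomial.X + Polynomial.C (((2*k+1 : ℤ) : ℂ) * c)) ∘ₗ tay ((k : ℂ) + 1/2))

/-- `f(s) ↦ λ^{p+1/2} b f(x+p)`, `p = k + 1/2` -/
def phiQo (lam b : ℂ) (k : ℤ) : Polynomial ℂ →ₗ[ℂ] Polynomial ℂ :=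
  (lam ^ (k + 1) * b) • tay ((k : ℂ) + 1/2)

/-- one graded component of `R_g`, i.e. `g(y)ℂ[x,y]` (equivalently `g(t)ℂ[s,t]`) -/
def Rg (g : Polynomial ℂ) : Submodule ℂ P2 := LinearMap.range (mulOp (Polynomial.C g))

/-- the even component of `S_g`, i.e. `g(y)(xℂ[x,y] + yℂ[x,y])` -/
def Sg (g : Polynomial ℂ) : Submodule ℂ P2 :=
  LinearMap.range (mulOp (xP * Polynomial.C g)) ⊔ LinearMap.range (mulOp (yP * Polynomial.C g))

/-- the embedding `ℂ[x] → ℂ[x,y]` -/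
def embX (f : Polynomial ℂ) : P2 := f.map Polynomial.C

/-- `f(x) ↦` class of `g'(y)·f(x)` in `ℂ[x,y]/R_g` -/
def psiMap (g g' : Polynomial ℂ) (f : Polynomial ℂ) : P2 ⧸ Rg g :=
  (Rg g).mkQ (Polynomial.C g' * embX f)


/-- a graded subspace `F₀ ⊕ F₁` of the Neveu-Schwarz module `Ψ_ns(λ)` invariant under all
`L_m` and `G_p` (here `β = y` on the even part and `β = y + 1/2` on the odd part) -/
def IsNsSub (lam : ℂ) (F₀ F₁ : Submodule ℂ P2) : Prop :=
  (∀ m : ℤ, ∀ f ∈ F₀, genL lam Polynomial.X m f ∈ F₀) ∧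
  (∀ m : ℤ, ∀ f ∈ F₁, genL lam (Polynomial.X + Polynomial.C (1/2)) m f ∈ F₁) ∧
  (∀ k : ℤ, ∀ f ∈ F₀, omegaGe lam k f ∈ F₁) ∧
  (∀ k : ℤ, ∀ f ∈ F₁, omegaGo lam Polynomial.X k f ∈ F₀)

variable {R : Type*} [CommRing R]

theorem taylor_one_coeff_of_natDegree_le {p : R[X]} {j : ℕ} (h : p.natDegree ≤ j) :
    (taylor (1 : R) p).coeff j = p.coeff j := by
  rw [taylor_coeff]
  have : hasseDeriv j p = C (p.coeff j) := by
    ext n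
    rcases n with _ | n
    · simp [hasseDeriv_coeff]
    · rw [hasseDeriv_coeff]
      rw [coeff_eq_zero_of_natDegree_lt (lt_of_le_of_lt h (by omega))]
      simp [coeff_C]
  rw [this, eval_C]

theorem delta_natDegree_le {p : R[X]} {d : ℕ} (h : p.natDegree ≤ d + 1) :
    (taylor (1 : R) p - p).natDegree ≤ d := by
  rw [natDegree_le_iff_coeff_eq_zero]
  intro N hN
  rw [coeff_sub, taylor_one_coeff_of_natDegree_le (le_trans h hN), sub_self]

theorem delta_coeff_top {p : R[X]} {d : ℕ} (h : p.natDegree ≤ d + 1) :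
    (taylor (1 : R) p - p).coeff d = ((d : R) + 1) * p.coeff (d + 1) := by
  rw [coeff_sub, taylor_coeff]
  have hdeg : (hasseDeriv d p).natDegree ≤ 1 := le_trans (natDegree_hasseDeriv_le p d) (by omega)
  have := eq_X_add_C_of_natDegree_le_one hdeg
  rw [this]
  simp only [eval_add, eval_mul, eval_C, eval_X, mul_one]
  rw [hasseDeriv_coeff, hasseDeriv_coeff]
  simp [Nat.choose_succ_self_right, add_comm 1 d]
  try push_cast
  try ring

theorem mem_Rg {g : Polynomial ℂ} {f : P2} : f ∈ Rg g ↔ Polynomial.C g ∣ f := by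
  constructor
  · rintro ⟨h, rfl⟩
    exact Dvd.intro h rfl
  · rintro ⟨h, rfl⟩
    exact ⟨h, rfl⟩

theorem mem_Sg {g : Polynomial ℂ} {f : P2} :
    f ∈ Sg g ↔ ∃ h : P2, f = Polynomial.C g * h ∧ (h.coeff 0).coeff 0 = 0 := by
  constructor
  · intro hf
    rw [Sg, Submodule.mem_sup] at hf
    obtain ⟨u, ⟨a, rfl⟩, v, ⟨b, rfl⟩, rfl⟩ := hf
    refine ⟨X * a + Polynomial.C X * b, by unfold mulOp xP yP; simp [LinearMap.mulLeft_apply]; ring, ?_⟩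
    simp [mul_coeff_zero]
  · rintro ⟨h, rfl, h0⟩
    rw [Sg, Submodule.mem_sup]
    have h00 : h.coeff 0 = X * (h.coeff 0).divX := by
      conv_lhs => rw [← X_mul_divX_add (h.coeff 0)]
      rw [h0, map_zero, add_zero]
    have hrep : h = X * h.divX + Polynomial.C (X * (h.coeff 0).divX) := by
      conv_lhs => rw [← X_mul_divX_add h, h00]
    have key : Polynomial.C g * h =
        xP * Polynomial.C g * h.divX + yP * Polynomial.C g * Polynomial.C ((h.coeff 0).divX) := by
      conv_lhs => rw [hrep]
      unfold xP yP
      push_cast [map_mul]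
      ring
    exact ⟨xP * Polynomial.C g * h.divX, ⟨h.divX, rfl⟩,
      yP * Polynomial.C g * Polynomial.C ((h.coeff 0).divX), ⟨Polynomial.C ((h.coeff 0).divX), rfl⟩,
      key.symm⟩

theorem smul_as_mul (c : ℂ) (g : P2) : c • g = Polynomial.C (Polynomial.C c) * g := by
  rw [Algebra.smul_def]
  norm_num [Polynomial.algebraMap_apply]

theorem mul_closure {S : Submodule ℂ P2} (hx : ∀ f ∈ S, xP * f ∈ S)
    (hy : ∀ f ∈ S, yP * f ∈ S) : ∀ (q : P2), ∀ f ∈ S, q * f ∈ S := by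
  have hyn : ∀ n : ℕ, ∀ f ∈ S, yP ^ n * f ∈ S := by
    intro n
    induction n with
    | zero => simpa using fun f hf => hf
    | succ n ih =>
      intro f hf
      rw [pow_succ, mul_comm (yP ^ n) yP, mul_assoc]
      exact hy _ (ih _ hf)
  have hxn : ∀ n : ℕ, ∀ f ∈ S, xP ^ n * f ∈ S := by
    intro n
    induction n with
    | zero => simpa using fun f hf => hf
    | succ n ih =>
      intro f hf
      rw [pow_succ, mul_comm (xP ^ n) xP, mul_assoc]
      exact hx _ (ih _ hf)
  have hCc : ∀ (a : Polynomial ℂ), ∀ f ∈ S, (Polynomial.C a : P2) * f ∈ S := by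
    intro a
    induction a using Polynomial.induction_on' with
    | add p q hp hq =>
      intro f hf
      rw [map_add, add_mul]
      exact S.add_mem (hp f hf) (hq f hf)
    | monomial n c =>
      intro f hf
      have : (Polynomial.C (Polynomial.monomial n c) : P2) * f
          = c • (yP ^ n * f) := by
        rw [smul_as_mul, ← Polynomial.C_mul_X_pow_eq_monomial]
        unfold yP
        push_cast [map_mul, map_pow]
        ring
      rw [this]
      exact S.smul_mem _ (hyn n f hf)
  intro q
  induction q using Polynomial.induction_on' with
  | add p q hp hq =>
    intro f hf
    rw [add_mul]
    exact S.add_mem (hp f hf) (hq f hf)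
  | monomial n a =>
    intro f hf
    rw [← Polynomial.C_mul_X_pow_eq_monomial, mul_assoc]
    exact hCc a _ (hxn n f hf)

theorem keyLemma (I : Submodule ℂ P2)
    (hX : ∀ m : ℤ, ∀ f ∈ I, xP * taylor (Polynomial.C (m : ℂ)) f ∈ I)
    (hY : ∀ m : ℤ, ∀ f ∈ I, yP * taylor (Polynomial.C (m : ℂ)) f ∈ I) :
    ∃ g : Polynomial ℂ, I = Rg g ∨ I = Sg g := by
  have hx0 : ∀ f ∈ I, xP * f ∈ I := by
    intro f hf
    simpa using hX 0 f hf
  have hy0 : ∀ f ∈ I, yP * f ∈ I := by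
    intro f hf
    simpa using hY 0 f hf
  have hmul := mul_closure hx0 hy0
  set J : Ideal (Polynomial ℂ) :=
    { carrier := {a | (Polynomial.C a : P2) * xP ∈ I ∧ (Polynomial.C a : P2) * yP ∈ I}
      add_mem' := by
        rintro a b ⟨ha1, ha2⟩ ⟨hb1, hb2⟩
        constructor <;> rw [map_add, add_mul] <;> exact I.add_mem ‹_› ‹_›
      zero_mem' := by simp
      smul_mem' := by
        rintro r a ⟨ha1, ha2⟩
        rw [smul_eq_mul]
        exact ⟨by rw [map_mul, mul_assoc]; exact hmul _ _ ha1,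
          by rw [map_mul, mul_assoc]; exact hmul _ _ ha2⟩ } with hJdef
  set g : Polynomial ℂ := Submodule.IsPrincipal.generator J with hgdef
  have hgJ : g ∈ J := Submodule.IsPrincipal.generator_mem J
  have hmemJ : ∀ a : Polynomial ℂ, a ∈ J ↔ g ∣ a := fun a =>
    Submodule.IsPrincipal.mem_iff_generator_dvd J
  set P' : P2 → Prop := fun f => ∀ m : ℤ,
    xP * taylor (Polynomial.C (m : ℂ)) f ∈ I ∧ yP * taylor (Polynomial.C (m : ℂ)) f ∈ I
    with hP'def
  have hP'I : ∀ f ∈ I, P' f := fun f hf m => ⟨hX m f hf, hY m f hf⟩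
  have hP'sub : ∀ f f', P' f → P' f' → P' (f - f') := by
    intro f f' hf hf' m
    rw [map_sub]
    refine ⟨?_, ?_⟩
    · rw [mul_sub]; exact I.sub_mem ((hf m).1) ((hf' m).1)
    · rw [mul_sub]; exact I.sub_mem ((hf m).2) ((hf' m).2)
  have hP'mul : ∀ f, P' f → ∀ q, P' (q * f) := by
    intro f hf q m
    rw [taylor_mul]
    constructor
    · have := (hf m).1
      have h2 := hmul (taylor (Polynomial.C (m:ℂ)) q) _ this
      rw [show xP * (taylor (Polynomial.C (m:ℂ)) q * taylor (Polynomial.C (m:ℂ)) f)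
        = taylor (Polynomial.C (m:ℂ)) q * (xP * taylor (Polynomial.C (m:ℂ)) f) by ring]
      exact h2
    · have := (hf m).2
      have h2 := hmul (taylor (Polynomial.C (m:ℂ)) q) _ this
      rw [show yP * (taylor (Polynomial.C (m:ℂ)) q * taylor (Polynomial.C (m:ℂ)) f)
        = taylor (Polynomial.C (m:ℂ)) q * (yP * taylor (Polynomial.C (m:ℂ)) f) by ring]
      exact h2
  have hP'tay : ∀ f, P' f → P' (taylor (1 : Polynomial ℂ) f) := by
    intro f hf m
    rw [show (1 : Polynomial ℂ) = Polynomial.C (1:ℂ) by simp, taylor_taylor,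
      show Polynomial.C ((m:ℂ)) + Polynomial.C (1:ℂ) = Polynomial.C (((m+1:ℤ):ℂ)) by
        push_cast; rw [map_add]]
    exact hf (m+1)
  have hP'delta : ∀ f, P' f → P' (taylor (1 : Polynomial ℂ) f - f) := fun f hf =>
    hP'sub _ _ (hP'tay f hf) hf
  have hP'Cg : P' (Polynomial.C g) := by
    intro m
    rw [taylor_C]
    exact ⟨by rw [mul_comm]; exact hgJ.1, by rw [mul_comm]; exact hgJ.2⟩
  have main : ∀ n : ℕ, ∀ f : P2, P' f → f.natDegree ≤ n → ∀ i, g ∣ f.coeff i := by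
    intro n
    induction n with
    | zero =>
      intro f hf hdeg i
      have hfC : f = Polynomial.C (f.coeff 0) := Polynomial.eq_C_of_natDegree_le_zero hdeg
      have h0 := hf 0
      simp only [Int.cast_zero, map_zero, taylor_zero] at h0
      have haJ : f.coeff 0 ∈ J := by
        constructor
        · rw [mul_comm]; rw [hfC] at h0; exact h0.1
        · rw [mul_comm]; rw [hfC] at h0; exact h0.2
      rcases i with _ | i
      · exact (hmemJ _).mp haJ
      · rw [Polynomial.coeff_eq_zero_of_natDegree_lt (lt_of_le_of_lt hdeg (by omega))]
        exact dvd_zero g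
    | succ n ih =>
      intro f hf hdeg i
      set Δ : P2 := taylor (1 : Polynomial ℂ) f - f with hΔdef
      have hΔP' : P' Δ := hP'delta f hf
      have hΔdeg : Δ.natDegree ≤ n := delta_natDegree_le hdeg
      have htop : g ∣ f.coeff (n + 1) := by
        have h1 := ih Δ hΔP' hΔdeg n
        rw [delta_coeff_top hdeg] at h1
        have hcn : ((n : Polynomial ℂ) + 1) = Polynomial.C ((n : ℂ) + 1) := by
          rw [map_add, map_one, Polynomial.C_eq_natCast]
        have hne : ((n : ℂ) + 1) ≠ 0 := by
          intro h
          exact_mod_cast h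
        have : f.coeff (n+1)
            = Polynomial.C ((n:ℂ)+1)⁻¹ * (((n : Polynomial ℂ) + 1) * f.coeff (n+1)) := by
          rw [hcn, ← mul_assoc, ← map_mul, inv_mul_cancel₀ hne, map_one, one_mul]
        rw [this]
        exact h1.mul_left _
      obtain ⟨w, hw⟩ := htop
      set f₂ : P2 := f - Polynomial.C (f.coeff (n+1)) * xP ^ (n+1) with hf₂def
      have hf₂P' : P' f₂ := by
        apply hP'sub _ _ hf
        have : (Polynomial.C (f.coeff (n+1)) : P2) * xP ^ (n+1)
            = (Polynomial.C w * xP ^ (n+1)) * Polynomial.C g := by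
          rw [hw]
          push_cast [map_mul]
          ring
        rw [this]
        exact hP'mul _ hP'Cg _
      have hf₂deg : f₂.natDegree ≤ n := by
        rw [natDegree_le_iff_coeff_eq_zero]
        intro N hN
        rw [hf₂def, Polynomial.coeff_sub, Polynomial.coeff_C_mul]
        show f.coeff N - f.coeff (n+1) * (Polynomial.X ^ (n+1)).coeff N = 0
        rcases eq_or_ne N (n+1) with rfl | hNe
        · rw [Polynomial.coeff_X_pow, if_pos rfl, mul_one, sub_self]
        · rw [Polynomial.coeff_X_pow, if_neg hNe, mul_zero, sub_zero,
            Polynomial.coeff_eq_zero_of_natDegree_lt (lt_of_le_of_lt hdeg (by omega))]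
      rcases lt_or_ge n.succ i with hi | hi
      · rw [Polynomial.coeff_eq_zero_of_natDegree_lt (lt_of_le_of_lt hdeg hi)]
        exact dvd_zero g
      · rcases eq_or_ne i (n+1) with rfl | hie
        · exact ⟨w, hw⟩
        · have := ih f₂ hf₂P' hf₂deg i
          rw [hf₂def, Polynomial.coeff_sub, Polynomial.coeff_C_mul] at this
          have hXc : (xP ^ (n+1)).coeff i = 0 := by
            show (Polynomial.X ^ (n+1)).coeff i = 0
            rw [Polynomial.coeff_X_pow, if_neg hie]
          rw [hXc, mul_zero, sub_zero] at this
          exact this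
  have hIRg : ∀ f ∈ I, Polynomial.C g ∣ f := by
    intro f hf
    rw [Polynomial.C_dvd_iff_dvd_coeff]
    exact fun i => main f.natDegree f (hP'I f hf) le_rfl i
  have hSgI : Sg g ≤ I := by
    intro f hf
    rw [Sg, Submodule.mem_sup] at hf
    obtain ⟨u, ⟨a, rfl⟩, v, ⟨b, rfl⟩, rfl⟩ := hf
    apply I.add_mem
    · show xP * Polynomial.C g * a ∈ I
      rw [show xP * Polynomial.C g * a = a * (Polynomial.C g * xP) by ring]
      exact hmul a _ hgJ.1
    · show yP * Polynomial.C g * b ∈ I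
      rw [show yP * Polynomial.C g * b = b * (Polynomial.C g * yP) by ring]
      exact hmul b _ hgJ.2
  by_cases hsub : ∀ f ∈ I, f ∈ Sg g
  · exact ⟨g, Or.inr (le_antisymm (fun f hf => hsub f hf) hSgI)⟩
  · push_neg at hsub
    obtain ⟨f, hfI, hfn⟩ := hsub
    obtain ⟨h, hh⟩ := hIRg f hfI
    set c : ℂ := (h.coeff 0).coeff 0 with hcdef
    have hc : c ≠ 0 := by
      intro h0
      exact hfn (mem_Sg.mpr ⟨h, hh, h0⟩)
    have h2 : Polynomial.C g * (h - Polynomial.C (Polynomial.C c)) ∈ Sg g :=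
      mem_Sg.mpr ⟨h - Polynomial.C (Polynomial.C c), rfl, by
        rw [Polynomial.coeff_sub, Polynomial.coeff_C_zero, Polynomial.coeff_sub,
          Polynomial.coeff_C_zero]
        simp [hcdef]⟩
    have h3 : Polynomial.C g * Polynomial.C (Polynomial.C c) ∈ I := by
      have h4 := I.sub_mem hfI (hSgI h2)
      rw [hh] at h4
      have : Polynomial.C g * h - Polynomial.C g * (h - Polynomial.C (Polynomial.C c))
          = Polynomial.C g * Polynomial.C (Polynomial.C c) := by ring
      rwa [this] at h4
    have h4 : (Polynomial.C g : P2) ∈ I := by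
      have h5 := I.smul_mem c⁻¹ h3
      rw [smul_as_mul] at h5
      have hone : (Polynomial.C (Polynomial.C c⁻¹) : P2) * Polynomial.C (Polynomial.C c) = 1 := by
        rw [← map_mul, ← map_mul, inv_mul_cancel₀ hc, map_one, map_one]
      have : Polynomial.C (Polynomial.C c⁻¹) * (Polynomial.C g * Polynomial.C (Polynomial.C c))
          = (Polynomial.C g : P2) := by
        rw [show Polynomial.C (Polynomial.C c⁻¹) * (Polynomial.C g * Polynomial.C (Polynomial.C c))
          = Polynomial.C g * (Polynomial.C (Polynomial.C c⁻¹) * Polynomial.C (Polynomial.C c)) by ring,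
          hone, mul_one]
      rwa [this] at h5
    refine ⟨g, Or.inl (le_antisymm (fun f' hf' => mem_Rg.mpr (hIRg f' hf')) ?_)⟩
    rintro f' ⟨a, rfl⟩
    show Polynomial.C g * a ∈ I
    rw [mul_comm]
    exact hmul a _ h4

theorem genL_apply (lam : ℂ) (β : Polynomial ℂ) (m : ℤ) (f : P2) :
    genL lam β m f
      = lam ^ m • ((xP + Polynomial.C ((m : ℂ) • β)) * taylor (Polynomial.C (m : ℂ)) f) := rfl

theorem omegaGe_apply (lam : ℂ) (k : ℤ) (f : P2) :
    omegaGe lam k f = lam ^ k • taylor (Polynomial.C ((k : ℂ) + 1/2)) f := rfl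

theorem omegaGo_apply (lam : ℂ) (β : Polynomial ℂ) (k : ℤ) (f : P2) :
    omegaGo lam β k f = lam ^ (k + 1) •
      ((xP + Polynomial.C (((2*k+1 : ℤ) : ℂ) • β)) * taylor (Polynomial.C ((k : ℂ) + 1/2)) f) :=
  rfl

theorem extract_dvd {g w : Polynomial ℂ} {h : P2}
    (hd : Polynomial.C g ∣ (xP + Polynomial.C w) * h) : Polynomial.C g ∣ h := by
  rw [Polynomial.C_dvd_iff_dvd_coeff] at hd ⊢
  have hcoeff : ∀ i : ℕ, ((xP + Polynomial.C w) * h).coeff (i+1)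
      = h.coeff i + w * h.coeff (i+1) := by
    intro i
    rw [add_mul, Polynomial.coeff_add, Polynomial.coeff_C_mul]
    show (Polynomial.X * h).coeff (i+1) + _ = _
    rw [Polynomial.coeff_X_mul]
  have main : ∀ d : ℕ, ∀ i : ℕ, h.natDegree ≤ i + d → g ∣ h.coeff i := by
    intro d
    induction d with
    | zero =>
      intro i hi
      have h1 := hd (i+1)
      have hz : h.coeff (i+1) = 0 := Polynomial.coeff_eq_zero_of_natDegree_lt (by omega)
      rw [hcoeff i, hz, mul_zero, add_zero] at h1
      exact h1
    | succ d ih =>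
      intro i hi
      have h1 := hd (i+1)
      rw [hcoeff i] at h1
      have h2 := ih (i+1) (by omega)
      have h3 : h.coeff i = (h.coeff i + w * h.coeff (i+1)) - w * h.coeff (i+1) := by ring
      rw [h3]
      exact dvd_sub h1 (h2.mul_left w)
  exact fun i => main h.natDegree i (by omega)

theorem C_dvd_taylor {g : Polynomial ℂ} {h : P2} (r : Polynomial ℂ)
    (hd : Polynomial.C g ∣ h) : Polynomial.C g ∣ taylor r h := by
  obtain ⟨q, rfl⟩ := hd
  exact ⟨taylor r q, by rw [taylor_mul, taylor_C]⟩

theorem Sg_le_Rg (g : Polynomial ℂ) : Sg g ≤ Rg g := by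
  intro f hf
  obtain ⟨h, rfl, -⟩ := mem_Sg.mp hf
  exact mem_Rg.mpr (Dvd.intro h rfl)

theorem Rg_le_Rg {g ghat : Polynomial ℂ} (hdvd : ghat ∣ g) : Rg g ≤ Rg ghat := by
  intro f hf
  exact mem_Rg.mpr (dvd_trans (map_dvd (Polynomial.C (R := Polynomial ℂ)) hdvd) (mem_Rg.mp hf))

theorem Rg_mul_taylor_mem (g : Polynomial ℂ) (A : P2) (r : Polynomial ℂ) {f : P2}
    (hf : f ∈ Rg g) : A * taylor r f ∈ Rg g :=
  mem_Rg.mpr (((C_dvd_taylor r (mem_Rg.mp hf))).mul_left A)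

theorem Sg_mulC_mem (g : Polynomial ℂ) (A : P2) (hA : (A.coeff 0).coeff 0 = 0) (h : P2)
    (r : Polynomial ℂ) {f : P2} (hf : f ∈ Rg g) : A * taylor r f ∈ Sg g := by
  obtain ⟨q, rfl⟩ := mem_Rg.mp hf
  rw [taylor_mul, taylor_C]
  refine mem_Sg.mpr ⟨A * taylor r q, by ring, ?_⟩
  rw [Polynomial.mul_coeff_zero, Polynomial.mul_coeff_zero, hA, zero_mul]

theorem isNsSub_Rg (lam : ℂ) (g : Polynomial ℂ) : IsNsSub lam (Rg g) (Rg g) := by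
  refine ⟨?_, ?_, ?_, ?_⟩
  · intro m f hf
    rw [genL_apply]
    exact (Rg g).smul_mem _ (Rg_mul_taylor_mem g _ _ hf)
  · intro m f hf
    rw [genL_apply]
    exact (Rg g).smul_mem _ (Rg_mul_taylor_mem g _ _ hf)
  · intro k f hf
    rw [omegaGe_apply]
    have := Rg_mul_taylor_mem g 1 (Polynomial.C ((k:ℂ) + 1/2)) hf
    rw [one_mul] at this
    exact (Rg g).smul_mem _ this
  · intro k f hf
    rw [omegaGo_apply]
    exact (Rg g).smul_mem _ (Rg_mul_taylor_mem g _ _ hf)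

theorem isNsSub_Sg (lam : ℂ) (g : Polynomial ℂ) : IsNsSub lam (Sg g) (Rg g) := by
  refine ⟨?_, ?_, ?_, ?_⟩
  · intro m f hf
    rw [genL_apply]
    refine (Sg g).smul_mem _ (Sg_mulC_mem g _ ?_ f _ (Sg_le_Rg g hf))
    rw [Polynomial.coeff_add, show xP.coeff 0 = 0 from Polynomial.coeff_X_zero,
      Polynomial.coeff_C_zero, zero_add, Polynomial.coeff_smul, Polynomial.coeff_X_zero,
      smul_zero]
  · intro m f hf
    rw [genL_apply]
    exact (Rg g).smul_mem _ (Rg_mul_taylor_mem g _ _ hf)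
  · intro k f hf
    rw [omegaGe_apply]
    have := Rg_mul_taylor_mem g 1 (Polynomial.C ((k:ℂ) + 1/2)) (Sg_le_Rg g hf)
    rw [one_mul] at this
    exact (Rg g).smul_mem _ this
  · intro k f hf
    rw [omegaGo_apply]
    refine (Sg g).smul_mem _ (Sg_mulC_mem g _ ?_ f _ hf)
    rw [Polynomial.coeff_add, show xP.coeff 0 = 0 from Polynomial.coeff_X_zero,
      Polynomial.coeff_C_zero, zero_add, Polynomial.coeff_smul, Polynomial.coeff_X_zero,
      smul_zero]

theorem CsX (c : ℂ) : (Polynomial.C (c • Polynomial.X) : P2) = c • yP :=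
  (Polynomial.smul_C c Polynomial.X).symm

theorem CCc (c : ℂ) : (Polynomial.C (Polynomial.C c) : P2) = c • 1 := by
  rw [smul_as_mul, mul_one]

theorem distA (c : ℂ) (t : P2) :
    (xP + Polynomial.C (c • Polynomial.X)) * t = xP * t + c • (yP * t) := by
  rw [CsX, add_mul, smul_mul_assoc]

theorem distB (a c : ℂ) (t : P2) :
    (xP + Polynomial.C (Polynomial.C a) + Polynomial.C (c • Polynomial.X)) * t
      = xP * t + a • t + c • (yP * t) := by
  rw [CCc, CsX, add_mul, add_mul, smul_mul_assoc, smul_mul_assoc, one_mul]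

theorem forward (lam : ℂ) (hlam : lam ≠ 0) (F₀ F₁ : Submodule ℂ P2)
    (h : IsNsSub lam F₀ F₁) :
    (∃ g : Polynomial ℂ, F₀ = Rg g ∧ F₁ = Rg g) ∨
    (∃ g : Polynomial ℂ, F₀ = Sg g ∧ F₁ = Rg g) := by
  obtain ⟨hL0, hL1, hGe, hGo⟩ := h
  have hlamz : ∀ n : ℤ, lam ^ n ≠ 0 := fun n => zpow_ne_zero n hlam
  have hGe' : ∀ k : ℤ, ∀ f ∈ F₀, taylor (Polynomial.C ((k:ℂ) + 1/2)) f ∈ F₁ := by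
    intro k f hf
    have h1 := hGe k f hf
    rw [omegaGe_apply] at h1
    exact (Submodule.smul_mem_iff F₁ (hlamz k)).mp h1
  have hGo' : ∀ k : ℤ, ∀ f ∈ F₁,
      (xP + Polynomial.C (((2*k+1:ℤ):ℂ) • Polynomial.X)) * taylor (Polynomial.C ((k:ℂ) + 1/2)) f
        ∈ F₀ := by
    intro k f hf
    have h1 := hGo k f hf
    rw [omegaGo_apply] at h1
    exact (Submodule.smul_mem_iff F₀ (hlamz (k+1))).mp h1
  -- shifted multiplication operators on F₀
  have comp1 : ∀ l m : ℤ, ∀ f ∈ F₀,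
      xP * taylor (Polynomial.C (m:ℂ)) f
        + ((2*l+1:ℤ):ℂ) • (yP * taylor (Polynomial.C (m:ℂ)) f) ∈ F₀ := by
    intro l m f hf
    have h1 := hGe' (m - l - 1) f hf
    have h2 := hGo' l _ h1
    rw [taylor_taylor, ← map_add] at h2
    have he : ((l:ℂ) + 1/2) + (((m - l - 1 : ℤ):ℂ) + 1/2) = (m:ℂ) := by push_cast; ring
    rw [he, distA] at h2
    exact h2
  have hY0 : ∀ m : ℤ, ∀ f ∈ F₀, yP * taylor (Polynomial.C (m:ℂ)) f ∈ F₀ := by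
    intro m f hf
    have h1 := comp1 0 m f hf
    have h3 := comp1 1 m f hf
    rw [show ((2*0+1:ℤ):ℂ) = (1:ℂ) by norm_num] at h1
    rw [show ((2*1+1:ℤ):ℂ) = (3:ℂ) by norm_num] at h3
    have key : yP * taylor (Polynomial.C (m:ℂ)) f
        = (2⁻¹:ℂ) • ((xP * taylor (Polynomial.C (m:ℂ)) f
            + (3:ℂ) • (yP * taylor (Polynomial.C (m:ℂ)) f))
          - (xP * taylor (Polynomial.C (m:ℂ)) f
            + (1:ℂ) • (yP * taylor (Polynomial.C (m:ℂ)) f))) := by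
      module
    rw [key]
    exact F₀.smul_mem _ (F₀.sub_mem h3 h1)
  have hX0 : ∀ m : ℤ, ∀ f ∈ F₀, xP * taylor (Polynomial.C (m:ℂ)) f ∈ F₀ := by
    intro m f hf
    have h1 := comp1 0 m f hf
    rw [show ((2*0+1:ℤ):ℂ) = (1:ℂ) by norm_num] at h1
    have key : xP * taylor (Polynomial.C (m:ℂ)) f
        = (xP * taylor (Polynomial.C (m:ℂ)) f
            + (1:ℂ) • (yP * taylor (Polynomial.C (m:ℂ)) f))
          - yP * taylor (Polynomial.C (m:ℂ)) f := by
      module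
    rw [key]
    exact F₀.sub_mem h1 (hY0 m f hf)
  obtain ⟨g, hg⟩ := keyLemma F₀ hX0 hY0
  -- F₁ is closed under multiplication
  have comp2 : ∀ k l : ℤ, ∀ f ∈ F₁,
      xP * taylor (Polynomial.C ((k:ℂ) + (l:ℂ) + 1)) f
        + ((l:ℂ) + 1/2) • taylor (Polynomial.C ((k:ℂ) + (l:ℂ) + 1)) f
        + ((2*k+1:ℤ):ℂ) • (yP * taylor (Polynomial.C ((k:ℂ) + (l:ℂ) + 1)) f) ∈ F₁ := by
    intro k l f hf
    have h1 := hGo' k f hf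
    have h2 := hGe' l _ h1
    have hmul : taylor (Polynomial.C ((l:ℂ) + 1/2))
        ((xP + Polynomial.C (((2*k+1:ℤ):ℂ) • Polynomial.X))
          * taylor (Polynomial.C ((k:ℂ) + 1/2)) f)
        = (xP + Polynomial.C (Polynomial.C ((l:ℂ) + 1/2))
            + Polynomial.C (((2*k+1:ℤ):ℂ) • Polynomial.X))
          * taylor (Polynomial.C ((k:ℂ) + (l:ℂ) + 1)) f := by
      rw [taylor_mul, map_add, taylor_C, taylor_taylor, ← map_add,
        show ((l:ℂ) + 1/2 + ((k:ℂ) + 1/2)) = ((k:ℂ) + (l:ℂ) + 1) by ring,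
        show (taylor (Polynomial.C ((l:ℂ) + 1/2)) xP : P2)
            = xP + Polynomial.C (Polynomial.C ((l:ℂ) + 1/2)) from taylor_X _]
    rw [hmul, distB] at h2
    exact h2
  have hy1 : ∀ f ∈ F₁, yP * f ∈ F₁ := by
    intro f hf
    have e1 := comp2 0 (-1) f hf
    have e2 := comp2 1 (-2) f hf
    rw [show ((0:ℤ):ℂ) + ((-1:ℤ):ℂ) + 1 = (0:ℂ) by push_cast; ring] at e1
    rw [show ((1:ℤ):ℂ) + ((-2:ℤ):ℂ) + 1 = (0:ℂ) by push_cast; ring] at e2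
    rw [map_zero, taylor_zero] at e1 e2
    rw [show ((-1:ℤ):ℂ) + 1/2 = -(2⁻¹:ℂ) by push_cast; ring,
      show ((2*0+1:ℤ):ℂ) = (1:ℂ) by norm_num] at e1
    rw [show ((-2:ℤ):ℂ) + 1/2 = -(3/2:ℂ) by push_cast; ring,
      show ((2*1+1:ℤ):ℂ) = (3:ℂ) by norm_num] at e2
    have key : yP * f = (2⁻¹:ℂ) • (f -
        ((xP * f + (-(2⁻¹:ℂ)) • f + (1:ℂ) • (yP * f))
          - (xP * f + (-(3/2:ℂ)) • f + (3:ℂ) • (yP * f)))) := by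
      module
    rw [key]
    exact F₁.smul_mem _ (F₁.sub_mem hf (F₁.sub_mem e1 e2))
  have hx1 : ∀ f ∈ F₁, xP * f ∈ F₁ := by
    intro f hf
    have e1 := comp2 0 (-1) f hf
    rw [show ((0:ℤ):ℂ) + ((-1:ℤ):ℂ) + 1 = (0:ℂ) by push_cast; ring] at e1
    rw [map_zero, taylor_zero] at e1
    rw [show ((-1:ℤ):ℂ) + 1/2 = -(2⁻¹:ℂ) by push_cast; ring,
      show ((2*0+1:ℤ):ℂ) = (1:ℂ) by norm_num] at e1
    have key : xP * f = (xP * f + (-(2⁻¹:ℂ)) • f + (1:ℂ) • (yP * f))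
        + (2⁻¹:ℂ) • f - yP * f := by
      module
    rw [key]
    exact F₁.sub_mem (F₁.add_mem e1 (F₁.smul_mem _ hf)) (hy1 f hf)
  have hmul1 := mul_closure hx1 hy1
  -- F₁ ⊆ Rg g
  have hF0Rg : F₀ ≤ Rg g := by
    rcases hg with rfl | rfl
    · exact le_rfl
    · exact Sg_le_Rg g
  have hF1le : F₁ ≤ Rg g := by
    intro f hf
    have h1 := hGo' 0 f hf
    have h2 := mem_Rg.mp (hF0Rg h1)
    have h3 := extract_dvd h2
    have h4 : Polynomial.C g ∣ f := by
      obtain ⟨q, hq⟩ := h3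
      have : f = taylor (Polynomial.C (-((0:ℂ) + 1/2))) (Polynomial.C g * q) := by
        rw [← hq, taylor_taylor, ← map_add,
          show (-((0:ℂ) + 1/2) + (((0:ℤ):ℂ) + 1/2)) = (0:ℂ) by push_cast; ring,
          map_zero, taylor_zero]
      rw [this, taylor_mul, taylor_C]
      exact Dvd.intro _ rfl
    exact mem_Rg.mpr h4
  -- Rg g ⊆ F₁
  have hCgF1 : (Polynomial.C g : P2) ∈ F₁ := by
    rcases hg with h0 | h0
    · have hCg0 : (Polynomial.C g : P2) ∈ F₀ := by
        rw [h0]; exact mem_Rg.mpr dvd_rfl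
      have h1 := hGe' 0 _ hCg0
      rwa [taylor_C] at h1
    · have hxg : xP * Polynomial.C g ∈ F₀ := by
        rw [h0]
        refine mem_Sg.mpr ⟨xP, mul_comm _ _, ?_⟩
        rw [show xP.coeff 0 = 0 from Polynomial.coeff_X_zero]
        simp
      have e0 := hGe' 0 _ hxg
      have e1 := hGe' 1 _ hxg
      rw [taylor_mul, taylor_C] at e0 e1
      rw [show taylor (Polynomial.C ((0:ℤ) + 1/2 : ℂ)) xP = xP + Polynomial.C (Polynomial.C ((0:ℤ) + 1/2 : ℂ)) from taylor_X _] at e0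
      rw [show taylor (Polynomial.C ((1:ℤ) + 1/2 : ℂ)) xP = xP + Polynomial.C (Polynomial.C ((1:ℤ) + 1/2 : ℂ)) from taylor_X _] at e1
      have key : (Polynomial.C g : P2)
          = (xP + Polynomial.C (Polynomial.C ((1:ℤ) + 1/2 : ℂ))) * Polynomial.C g
            - (xP + Polynomial.C (Polynomial.C ((0:ℤ) + 1/2 : ℂ))) * Polynomial.C g := by
        rw [CCc, CCc]
        have : ((1:ℤ) + 1/2 : ℂ) = ((0:ℤ) + 1/2 : ℂ) + 1 := by push_cast; ring
        rw [this]
        generalize ((0:ℤ) + 1/2 : ℂ) = a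
        simp only [add_mul, smul_mul_assoc, one_mul]
        module
      rw [key]
      exact F₁.sub_mem e1 e0
  have hRgF1 : Rg g ≤ F₁ := by
    rintro f ⟨a, rfl⟩
    show Polynomial.C g * a ∈ F₁
    rw [mul_comm]
    exact hmul1 a _ hCgF1
  have hF1 : F₁ = Rg g := le_antisymm hF1le hRgF1
  rcases hg with h0 | h0
  · exact Or.inl ⟨g, h0, hF1⟩
  · exact Or.inr ⟨g, h0, hF1⟩

/-- The submodules of the Neveu-Schwarz module `Ψ_ns(λ)` are exactly the
graded subspaces `R_g^ns` and `S_g^ns`, `g ∈ ℂ[y]`; moreover `S_g^ns ⊆ R_g^ns ⊆ R_ĝ^ns`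
whenever `ĝ ∣ g`. -/
theorem statement15 (lam : ℂ) (hlam : lam ≠ 0) :
    (∀ F₀ F₁ : Submodule ℂ P2,
      IsNsSub lam F₀ F₁ ↔
        ((∃ g : Polynomial ℂ, F₀ = Rg g ∧ F₁ = Rg g) ∨
         (∃ g : Polynomial ℂ, F₀ = Sg g ∧ F₁ = Rg g))) ∧
    (∀ g ghat : Polynomial ℂ, ghat ∣ g → Sg g ≤ Rg g ∧ Rg g ≤ Rg ghat) := by
  constructor
  · intro F₀ F₁
    constructor
    · exact forward lam hlam F₀ F₁
    · rintro (⟨g, rfl, rfl⟩ | ⟨g, rfl, rfl⟩)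
      · exact isNsSub_Rg lam g
      · exact isNsSub_Sg lam g
  · intro g ghat hdvd
    exact ⟨Sg_le_Rg g, Rg_le_Rg hdvd⟩
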